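/- arXiv:2207.02544 — 3 statements merged into one kernel-verified Lean document; each statement's English description precedes it below -/
import Mathlib

section
/- Let σ : ℝ³ → Matrix (Fin 3) (Fin 3) ℝ be a continuously differentiable symmetric-matrix-valued field (σ_ij = σ_ji pointwise) and let μ : ℝ³ → ℝ³ be a twice continuously differentiable vector field. Set α = −σ and γ = ∇×μ, i.e., γ_i = Σ_{j,k} ε_ijk ∂_j μ_k. Then at every point and for each k ∈ {1,2,3}, the stationarity equation Σ_j ∂_j α_kj + Σ_j ∂_j α_jk + Σ_{i,j} ε_ijk ∂_j γ_i = 0 holds if and only if the consistent couple stress equilibrium equation without body force holds: Σ_j ∂_j σ_jk + (1/2)( Σ_j ∂_k ∂_j μ_j − Σ_j ∂_j ∂_j μ_k ) = 0. -/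
attribute [local instance] Matrix.normedAddCommGroup Matrix.normedSpace

/-- The Levi-Civita (permutation) symbol on `Fin 3`. -/
def levicivita (i j k : Fin 3) : ℝ :=
  if (i, j, k) = (0, 1, 2) ∨ (i, j, k) = (1, 2, 0) ∨ (i, j, k) = (2, 0, 1) then 1
  else if (i, j, k) = (2, 1, 0) ∨ (i, j, k) = (0, 2, 1) ∨ (i, j, k) = (1, 0, 2) then -1
  else 0

/-- Partial derivative `∂_j f` at `x`. -/
noncomputable def pd (f : (Fin 3 → ℝ) → ℝ) (j : Fin 3) (x : Fin 3 → ℝ) : ℝ :=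
  fderiv ℝ f x (Pi.single j 1)

lemma pd_neg (f : (Fin 3 → ℝ) → ℝ) (j : Fin 3) (x : Fin 3 → ℝ) :
    pd (fun y => -(f y)) j x = -(pd f j x) := by
  simp [pd, fderiv_neg]

lemma pd_pd_comm (f : (Fin 3 → ℝ) → ℝ) (hf : ContDiff ℝ 2 f) (a b : Fin 3) (x : Fin 3 → ℝ) :
    pd (fun y => pd f a y) b x = pd (fun y => pd f b y) a x := by
  have hsd := (hf.contDiffAt (x := x)).isSymmSndFDerivAt (n := 2) (by norm_num)
  have hd : DifferentiableAt ℝ (fderiv ℝ f) x :=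
    ((hf.fderiv_right (m := 1) le_rfl).differentiable one_ne_zero).differentiableAt
  have key : ∀ (v w : Fin 3 → ℝ),
      fderiv ℝ (fun y => fderiv ℝ f y v) x w = fderiv ℝ (fderiv ℝ f) x w v := by
    intro v w
    rw [fderiv_clm_apply hd (differentiableAt_const v)]
    simp
  simp only [pd]
  rw [key, key, hsd]

lemma pd_linear_sum (c : Fin 3 → Fin 3 → ℝ) (F : Fin 3 → Fin 3 → (Fin 3 → ℝ) → ℝ)
    (j : Fin 3) (x : Fin 3 → ℝ) (hF : ∀ a b, DifferentiableAt ℝ (F a b) x) :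
    pd (fun y => ∑ a, ∑ b, c a b * F a b y) j x = ∑ a, ∑ b, c a b * pd (F a b) j x := by
  have h : HasFDerivAt (fun y => ∑ a, ∑ b, c a b * F a b y)
      (∑ a : Fin 3, ∑ b : Fin 3, c a b • fderiv ℝ (F a b) x) x := by
    apply HasFDerivAt.fun_sum
    intro a _
    apply HasFDerivAt.fun_sum
    intro b _
    exact (hF a b).hasFDerivAt.const_mul (c a b)
  simp only [pd, h.fderiv]
  simp

/-- With `α = −σ` (`σ` being the symmetric Cauchy stress) and `γ = ∇×μ` (`μ` being
the couple stress vector), the third stationarity equation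
`Σ_j ∂_j α_kj + Σ_j ∂_j α_jk + Σ_{i,j} ε_ijk ∂_j γ_i = 0` holds at a point and
component if and only if the equilibrium equation of the consistent couple stress
theory without body force holds there:
`Σ_j ∂_j σ_jk + (1/2)(Σ_j ∂_k ∂_j μ_j − Σ_j ∂_j ∂_j μ_k) = 0`. -/
theorem third_stationarity_iff_equilibrium
    (σ : (Fin 3 → ℝ) → Matrix (Fin 3) (Fin 3) ℝ) (hσ : ContDiff ℝ 1 σ)
    (hsym : ∀ x i j, σ x i j = σ x j i)
    (μ : (Fin 3 → ℝ) → Fin 3 → ℝ) (hμ : ContDiff ℝ 2 μ)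
    (x : Fin 3 → ℝ) (k : Fin 3) :
    ((∑ j, pd (fun y => -(σ y k j)) j x) + (∑ j, pd (fun y => -(σ y j k)) j x)
        + ∑ i, ∑ j, levicivita i j k *
            pd (fun y => ∑ a, ∑ b, levicivita i a b * pd (fun z => μ z b) a y) j x
      = 0)
    ↔ ((∑ j, pd (fun y => σ y j k) j x)
        + (1 / 2) * ((∑ j, pd (fun y => pd (fun z => μ z j) j y) k x)
            - ∑ j, pd (fun y => pd (fun z => μ z k) j y) j x)
      = 0) := by
  -- component regularity
  have hμb : ∀ b : Fin 3, ContDiff ℝ 2 (fun z => μ z b) := fun b => (contDiff_pi.mp hμ) b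
  have hpdμ : ∀ a b : Fin 3, ∀ y, DifferentiableAt ℝ (fun z => pd (fun w => μ w b) a z) y := by
    intro a b y
    have h1 : ContDiff ℝ 1 (fun z => pd (fun w => μ w b) a z) := by
      have := ((hμb b).fderiv_right (m := 1) le_rfl).clm_apply
        (contDiff_const (c := Pi.single a (1 : ℝ)))
      exact this
    exact (h1.differentiable one_ne_zero).differentiableAt
  -- rewrite the curl terms using linearity of pd
  have hcurl : ∀ i j : Fin 3,
      pd (fun y => ∑ a, ∑ b, levicivita i a b * pd (fun z => μ z b) a y) j x
        = ∑ a, ∑ b, levicivita i a b * pd (fun y => pd (fun z => μ z b) a y) j x := by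
    intro i j
    exact pd_linear_sum (fun a b => levicivita i a b)
      (fun a b y => pd (fun z => μ z b) a y) j x (fun a b => hpdμ a b x)
  have hs : ∀ i j a : Fin 3, pd (fun y => σ y i j) a x = pd (fun y => σ y j i) a x := by
    intro i j a
    have : (fun y => σ y i j) = (fun y => σ y j i) := by funext y; exact hsym y i j
    rw [this]
  have hD : ∀ a b c : Fin 3,
      pd (fun y => pd (fun z => μ z c) a y) b x = pd (fun y => pd (fun z => μ z c) b y) a x :=
    fun a b c => pd_pd_comm _ (hμb c) a b x

  simp only [hcurl, pd_neg]
  simp only [Fin.sum_univ_three]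
  have hk : k = 0 ∨ k = 1 ∨ k = 2 := by omega
  rcases hk with h | h | h <;> subst h <;>
    simp only [show levicivita 0 0 0 = 0 from rfl, show levicivita 0 0 1 = 0 from rfl, show levicivita 0 0 2 = 0 from rfl, show levicivita 0 1 0 = 0 from rfl, show levicivita 0 1 1 = 0 from rfl, show levicivita 0 1 2 = 1 from rfl, show levicivita 0 2 0 = 0 from rfl, show levicivita 0 2 1 = -1 from rfl, show levicivita 0 2 2 = 0 from rfl, show levicivita 1 0 0 = 0 from rfl, show levicivita 1 0 1 = 0 from rfl, show levicivita 1 0 2 = -1 from rfl, show levicivita 1 1 0 = 0 from rfl, show levicivita 1 1 1 = 0 from rfl, show levicivita 1 1 2 = 0 from rfl, show levicivita 1 2 0 = 1 from rfl, show levicivita 1 2 1 = 0 from rfl, show levicivita 1 2 2 = 0 from rfl, show levicivita 2 0 0 = 0 from rfl, show levicivita 2 0 1 = 1 from rfl, show levicivita 2 0 2 = 0 from rfl, show levicivita 2 1 0 = -1 from rfl, show levicivita 2 1 1 = 0 from rfl, show levicivita 2 1 2 = 0 from rfl, show levicivita 2 2 0 = 0 from rfl, show levicivita 2 2 1 = 0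 from rfl, show levicivita 2 2 2 = 0 from rfl, one_mul, neg_one_mul, zero_mul, mul_zero, add_zero, zero_add, neg_neg]
  · constructor <;> intro h <;>
      linarith [hs 0 1 1, hs 0 2 2, hD 0 2 2, hD 0 1 1]
  · constructor <;> intro h <;>
      linarith [hs 1 0 0, hs 1 2 2, hD 1 0 0, hD 1 2 2]
  · constructor <;> intro h <;>
      linarith [hs 2 0 0, hs 2 1 1, hD 2 1 1, hD 2 0 0]
end

section
/- Let n_p, n_q, n_r, n_b, n_s, n_a be natural numbers and let H₁ : Matrix n_p n_s ℝ, H₂ : Matrix n_p n_a ℝ, H₃ : Matrix n_q n_s ℝ, H₄ : Matrix n_r n_s ℝ with n_r = n_s and H₄ invertible, H₅ : Matrix n_b n_a ℝ with n_b = n_a and H₅ invertible, and E₁ : Matrix n_b n_b ℝ, E₂ : Matrix n_r n_r ℝ. Suppose vectors Δp, Δq, Δr, Δs, Δβ, Δα and residuals R_u, R_θ satisfy the block system: H₁Δs + H₂Δα = R_u; H₃Δs = R_θ; E₂Δr − H₄Δs = 0; H₁ᵀΔp + H₃ᵀΔq − H₄ᵀΔr = 0; E₁Δβ − H₅Δα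 = 0; H₂ᵀΔp − H₅ᵀΔβ = 0. Then the condensed system holds: (H₂H₅⁻¹E₁H₅⁻ᵀH₂ᵀ + H₁H₄⁻¹E₂H₄⁻ᵀH₁ᵀ)Δp + H₁H₄⁻¹E₂H₄⁻ᵀH₃ᵀΔq = R_u and H₃H₄⁻¹E₂H₄⁻ᵀH₁ᵀΔp + H₃H₄⁻¹E₂H₄⁻ᵀH₃ᵀΔq = R_θ. -/
open Matrix

/-! Each constitutive pair `E r = H s`, `Hᵀ r = f` with `H` invertible is solved locally for the
interpolated field, `s = H⁻¹ E H⁻ᵀ f`. Doing so for (Δr, Δs) with `H₄` and for (Δβ, Δα) with `H₅`,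
and substituting Δs and Δα into the two equilibrium equations, gives the condensed system. -/

theorem Matrix.eq_inv_mul_mul_inv_transpose_mulVec {m R : Type*} [Fintype m] [DecidableEq m]
    [CommRing R] {H E : Matrix m m R} (hH : IsUnit H) {r s f : m → R}
    (hE : E *ᵥ r = H *ᵥ s) (hr : Hᵀ *ᵥ r = f) : s = (H⁻¹ * E * H⁻¹ᵀ) *ᵥ f := by
  have := hH.invertible
  have hs : s = H⁻¹ *ᵥ E *ᵥ r := (inv_mulVec_eq_vec hE).symm
  have hr_eq : r = H⁻¹ᵀ *ᵥ f := by
    rw [transpose_nonsing_inv]; exact (inv_mulVec_eq_vec hr.symm).symm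
  rw [hs, hr_eq, mulVec_mulVec, mulVec_mulVec, Matrix.mul_assoc]

/-- 'Option two' static condensation of the six-field block system: assuming `H₄` and
`H₅` are square and invertible, any solution of the full block system satisfies the
condensed system with elemental stiffness
`K₁₁ = H₂H₅⁻¹E₁H₅⁻ᵀH₂ᵀ + H₁H₄⁻¹E₂H₄⁻ᵀH₁ᵀ`, etc. -/
theorem option_two_static_condensation {np nq ns na : ℕ}
    (H₁ : Matrix (Fin np) (Fin ns) ℝ) (H₂ : Matrix (Fin np) (Fin na) ℝ)
    (H₃ : Matrix (Fin nq) (Fin ns) ℝ)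
    (H₄ : Matrix (Fin ns) (Fin ns) ℝ) (hH₄ : IsUnit H₄)
    (H₅ : Matrix (Fin na) (Fin na) ℝ) (hH₅ : IsUnit H₅)
    (E₁ : Matrix (Fin na) (Fin na) ℝ) (E₂ : Matrix (Fin ns) (Fin ns) ℝ)
    (Δp Ru : Fin np → ℝ) (Δq Rθ : Fin nq → ℝ) (Δr Δs : Fin ns → ℝ)
    (Δβ Δα : Fin na → ℝ)
    (h1 : H₁ *ᵥ Δs + H₂ *ᵥ Δα = Ru)
    (h2 : H₃ *ᵥ Δs = Rθ)
    (h3 : E₂ *ᵥ Δr - H₄ *ᵥ Δs = 0)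
    (h4 : H₁ᵀ *ᵥ Δp + H₃ᵀ *ᵥ Δq - H₄ᵀ *ᵥ Δr = 0)
    (h5 : E₁ *ᵥ Δβ - H₅ *ᵥ Δα = 0)
    (h6 : H₂ᵀ *ᵥ Δp - H₅ᵀ *ᵥ Δβ = 0) :
    (H₂ * H₅⁻¹ * E₁ * (H₅⁻¹)ᵀ * H₂ᵀ + H₁ * H₄⁻¹ * E₂ * (H₄⁻¹)ᵀ * H₁ᵀ) *ᵥ Δp
        + (H₁ * H₄⁻¹ * E₂ * (H₄⁻¹)ᵀ * H₃ᵀ) *ᵥ Δq = Ru ∧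
      (H₃ * H₄⁻¹ * E₂ * (H₄⁻¹)ᵀ * H₁ᵀ) *ᵥ Δp
        + (H₃ * H₄⁻¹ * E₂ * (H₄⁻¹)ᵀ * H₃ᵀ) *ᵥ Δq = Rθ := by
  have hs : Δs = (H₄⁻¹ * E₂ * H₄⁻¹ᵀ) *ᵥ (H₁ᵀ *ᵥ Δp + H₃ᵀ *ᵥ Δq) :=
    eq_inv_mul_mul_inv_transpose_mulVec hH₄ (sub_eq_zero.mp h3) (sub_eq_zero.mp h4).symm
  have hα : Δα = (H₅⁻¹ * E₁ * H₅⁻¹ᵀ) *ᵥ (H₂ᵀ *ᵥ Δp) :=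
    eq_inv_mul_mul_inv_transpose_mulVec hH₅ (sub_eq_zero.mp h5) (sub_eq_zero.mp h6).symm
  subst h1 h2 hs hα
  constructor
  · simp only [mulVec_mulVec, mulVec_add, add_mulVec, Matrix.mul_assoc]
    abel
  · simp only [mulVec_mulVec, mulVec_add, Matrix.mul_assoc]
end

section
/- Let H₁ : Matrix n_p n_s ℝ, H₂ : Matrix n_p n_a ℝ, H₃ : Matrix n_q n_s ℝ, H₄ : Matrix n_r n_s ℝ, H₅ : Matrix n_b n_a ℝ, and let E₁ : Matrix n_b n_b ℝ and E₂ : Matrix n_r n_r ℝ be invertible with H₅ᵀE₁⁻¹H₅ (of size n_a × n_a) and H₄ᵀE₂⁻¹H₄ (of size n_s × n_s) invertible. Suppose vectors Δp, Δq, Δr, Δs, Δβ, Δα and residuals R_u, R_θ satisfy: H₁Δs + H₂Δα = R_u; H₃Δs = R_θ; E₂Δr − H₄Δs = 0; H₁ᵀΔp + H₃ᵀΔq − H₄ᵀΔr = 0; E₁Δβ − H₅Δα = 0; H₂ᵀΔp − H₅ᵀΔβ = 0. Then (H₂(H₅ᵀE₁⁻¹H₅)⁻¹H₂ᵀ + H₁(H₄ᵀE₂⁻¹H₄)⁻¹H₁ᵀ)Δp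 + H₁(H₄ᵀE₂⁻¹H₄)⁻¹H₃ᵀΔq = R_u and H₃(H₄ᵀE₂⁻¹H₄)⁻¹H₁ᵀΔp + H₃(H₄ᵀE₂⁻¹H₄)⁻¹H₃ᵀΔq = R_θ. -/
/-!
The equations `E₂Δr = H₄Δs` and `E₁Δβ = H₅Δα` give `Δr = E₂⁻¹H₄Δs` and `Δβ = E₁⁻¹H₅Δα`.
Substituted into the two equilibrium equations they read `(H₄ᵀE₂⁻¹H₄)Δs = H₁ᵀΔp + H₃ᵀΔq` and
`(H₅ᵀE₁⁻¹H₅)Δα = H₂ᵀΔp`, so the Schur-type products express `Δs` and `Δα` through `Δp, Δq`;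
inserting these into the two compatibility equations gives the condensed system.
-/

open Matrix

namespace Matrix

variable {m n K : Type*} [Fintype m] [DecidableEq m] [Fintype n] [DecidableEq n] [CommRing K]

theorem eq_inv_mulVec_of_mulVec_eq {A : Matrix n n K} (hA : IsUnit A) {x b : n → K}
    (h : A *ᵥ x = b) : x = A⁻¹ *ᵥ b := by
  let := hA.invertible
  exact (inv_mulVec_eq_vec h.symm).symm

theorem eq_schur_inv_mulVec_of_mulVec_eq {E : Matrix m m K} {H : Matrix m n K}
    (hE : IsUnit E) (hS : IsUnit (Hᵀ * E⁻¹ * H)) {x : m → K} {y g : n → K}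
    (hx : E *ᵥ x = H *ᵥ y) (hg : g = Hᵀ *ᵥ x) : y = (Hᵀ * E⁻¹ * H)⁻¹ *ᵥ g := by
  have hx' : x = E⁻¹ *ᵥ (H *ᵥ y) := eq_inv_mulVec_of_mulVec_eq hE hx
  refine eq_inv_mulVec_of_mulVec_eq hS ?_
  rw [hg, hx', mulVec_mulVec, mulVec_mulVec, Matrix.mul_assoc]

end Matrix

/-- 'Option one' static condensation of the six-field block system: assuming `E₁`,
`E₂` and the Schur-type products `H₅ᵀE₁⁻¹H₅` and `H₄ᵀE₂⁻¹H₄` are invertible, any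
solution of the full block system satisfies the condensed system. -/
theorem option_one_static_condensation {np nq nr ns nb na : ℕ}
    (H₁ : Matrix (Fin np) (Fin ns) ℝ) (H₂ : Matrix (Fin np) (Fin na) ℝ)
    (H₃ : Matrix (Fin nq) (Fin ns) ℝ) (H₄ : Matrix (Fin nr) (Fin ns) ℝ)
    (H₅ : Matrix (Fin nb) (Fin na) ℝ)
    (E₁ : Matrix (Fin nb) (Fin nb) ℝ) (E₂ : Matrix (Fin nr) (Fin nr) ℝ)
    (hE₁ : IsUnit E₁) (hE₂ : IsUnit E₂)
    (hS₁ : IsUnit (H₅ᵀ * E₁⁻¹ * H₅)) (hS₂ : IsUnit (H₄ᵀ * E₂⁻¹ * H₄))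
    (Δp Ru : Fin np → ℝ) (Δq Rθ : Fin nq → ℝ) (Δr : Fin nr → ℝ) (Δs : Fin ns → ℝ)
    (Δβ : Fin nb → ℝ) (Δα : Fin na → ℝ)
    (h1 : H₁ *ᵥ Δs + H₂ *ᵥ Δα = Ru)
    (h2 : H₃ *ᵥ Δs = Rθ)
    (h3 : E₂ *ᵥ Δr - H₄ *ᵥ Δs = 0)
    (h4 : H₁ᵀ *ᵥ Δp + H₃ᵀ *ᵥ Δq - H₄ᵀ *ᵥ Δr = 0)
    (h5 : E₁ *ᵥ Δβ - H₅ *ᵥ Δα = 0)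
    (h6 : H₂ᵀ *ᵥ Δp - H₅ᵀ *ᵥ Δβ = 0) :
    (H₂ * (H₅ᵀ * E₁⁻¹ * H₅)⁻¹ * H₂ᵀ + H₁ * (H₄ᵀ * E₂⁻¹ * H₄)⁻¹ * H₁ᵀ) *ᵥ Δp
        + (H₁ * (H₄ᵀ * E₂⁻¹ * H₄)⁻¹ * H₃ᵀ) *ᵥ Δq = Ru ∧
      (H₃ * (H₄ᵀ * E₂⁻¹ * H₄)⁻¹ * H₁ᵀ) *ᵥ Δp
        + (H₃ * (H₄ᵀ * E₂⁻¹ * H₄)⁻¹ * H₃ᵀ) *ᵥ Δq = Rθ := by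
  have hs : Δs = (H₄ᵀ * E₂⁻¹ * H₄)⁻¹ *ᵥ (H₁ᵀ *ᵥ Δp + H₃ᵀ *ᵥ Δq) :=
    eq_schur_inv_mulVec_of_mulVec_eq hE₂ hS₂ (sub_eq_zero.mp h3) (sub_eq_zero.mp h4)
  have hα : Δα = (H₅ᵀ * E₁⁻¹ * H₅)⁻¹ *ᵥ (H₂ᵀ *ᵥ Δp) :=
    eq_schur_inv_mulVec_of_mulVec_eq hE₁ hS₁ (sub_eq_zero.mp h5) (sub_eq_zero.mp h6)
  subst hs hα h1 h2
  simp only [add_mulVec, mulVec_add, mulVec_mulVec, Matrix.mul_assoc, and_true]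
  abel
end
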